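/- Suppose (in the approximation setting with uniform norm bound and polynomial trace convergence) that 0 is not an eigenvalue of Δ, i.e. ker Δ = 0. Then limᵢ F_{Δᵢ}(0) = 0 = dim_π(ker Δ). More generally, if λ is not an eigenvalue of Δ, then limᵢ F_{Δᵢ}(λ) = F_Δ(λ). -/

import Mathlib

open MeasureTheory Filter Set

/-- Spectral density function `F_Δ(lam) = μ([0, lam])`. -/
noncomputable def sdf (μ : Measure ℝ) (lam : ℝ) : ℝ := (μ (Icc 0 lam)).toReal

/-!
Since all measures live on the fixed interval `[0, K]`, Weierstrass approximation upgrades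
convergence of polynomial moments to weak convergence of the (finite) spectral measures. As the
measures carry no mass on `(-∞, 0)`, `F(lam)` is the mass of `(-∞, lam]`, whose frontier `{lam}`
is null for the limit measure exactly when `lam` is not an eigenvalue; the portmanteau theorem
then gives convergence of `F(lam)`.
-/

open Topology

lemma ContinuousOn.integrable_of_ae_mem {X E : Type*} [MeasurableSpace X] [TopologicalSpace X]
    [T2Space X] [OpensMeasurableSpace X] [NormedAddCommGroup E] {ν : Measure X}
    [IsFiniteMeasureOnCompacts ν] {s : Set X} {f : X → E} (hf : ContinuousOn f s)
    (hs : IsCompact s) (hν : ∀ᵐ x ∂ν, x ∈ s) : Integrable f ν := by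
  simpa [IntegrableOn, Measure.restrict_eq_self_of_ae_mem hν] using
    hf.integrableOn_compact (μ := ν) hs

lemma abs_integral_sub_integral_le {X : Type*} [MeasurableSpace X] {ν : Measure X}
    [IsFiniteMeasure ν] {s : Set X} {f g : X → ℝ} {ε : ℝ} (hf : Integrable f ν)
    (hg : Integrable g ν) (hν : ∀ᵐ x ∂ν, x ∈ s) (hfg : ∀ x ∈ s, |f x - g x| ≤ ε) :
    |∫ x, f x ∂ν - ∫ x, g x ∂ν| ≤ ε * ν.real univ := by
  rw [← integral_sub hf hg]
  exact norm_integral_le_of_norm_le_const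
    (hν.mono fun x hx => (Real.norm_eq_abs _).trans_le (hfg x hx))

lemma sdf_eq_toReal_measure_Iic {ν : Measure ℝ} (hν : ν (Iio 0) = 0) (lam : ℝ) :
    sdf ν lam = (ν (Iic lam)).toReal := by
  rw [sdf, ← Ici_inter_Iic, inter_comm, measure_inter_conull (by rwa [compl_Ici])]

section

variable {ι : Type*} {L : Filter ι}

lemma tendsto_of_forall_approx {u : ι → ℝ} {v : ℝ}
    (h : ∀ ε > 0, ∃ w : ι → ℝ, ∃ c, Tendsto w L (𝓝 c) ∧ (∀ᶠ i in L, |u i - w i| ≤ ε) ∧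
      |v - c| ≤ ε) :
    Tendsto u L (𝓝 v) := by
  rw [Metric.tendsto_nhds]
  intro ε hε
  obtain ⟨w, c, hw, huw, hvc⟩ := h (ε / 3) (by positivity)
  filter_upwards [huw, Metric.tendsto_nhds.mp hw (ε / 3) (by positivity)] with i hui hwi
  rw [Real.dist_eq, abs_lt] at hwi ⊢
  rw [abs_le] at hui hvc
  constructor <;> linarith [hui.1, hui.2, hvc.1, hvc.2, hwi.1, hwi.2]

theorem tendsto_integral_of_tendsto_integral_polynomial {a b : ℝ} {μ : Measure ℝ}
    {μs : ι → Measure ℝ} [IsFiniteMeasure μ] [∀ i, IsFiniteMeasure (μs i)]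
    (hμ : ∀ᵐ x ∂μ, x ∈ Icc a b) (hμs : ∀ i, ∀ᵐ x ∂μs i, x ∈ Icc a b)
    (hmom : ∀ p : Polynomial ℝ,
      Tendsto (fun i => ∫ x, p.eval x ∂μs i) L (𝓝 (∫ x, p.eval x ∂μ)))
    {f : ℝ → ℝ} (hf : ContinuousOn f (Icc a b)) :
    Tendsto (fun i => ∫ x, f x ∂μs i) L (𝓝 (∫ x, f x ∂μ)) := by
  set M := μ.real univ + 1
  have hM : 0 < M := by positivity
  have hmass : ∀ᶠ i in L, (μs i).real univ ≤ M := by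
    have hmass_lim := hmom 1
    simp only [Polynomial.eval_one, integral_const, smul_eq_mul, mul_one] at hmass_lim
    filter_upwards [hmass_lim.eventually (gt_mem_nhds (lt_add_one _))] with i hi using hi.le
  refine tendsto_of_forall_approx fun ε hε => ?_
  obtain ⟨p, hp⟩ := exists_polynomial_near_of_continuousOn a b f hf (ε / M) (by positivity)
  have hclose : ∀ (ν : Measure ℝ) [IsFiniteMeasure ν], (∀ᵐ x ∂ν, x ∈ Icc a b) →
      |∫ x, f x ∂ν - ∫ x, p.eval x ∂ν| ≤ ε / M * ν.real univ := fun ν _ hν =>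
    abs_integral_sub_integral_le (hf.integrable_of_ae_mem isCompact_Icc hν)
      (p.continuous.continuousOn.integrable_of_ae_mem isCompact_Icc hν) hν
      fun x hx => by rw [abs_sub_comm]; exact (hp x hx).le
  refine ⟨_, _, hmom p, ?_, ?_⟩
  · filter_upwards [hmass] with i hi
    calc _ ≤ ε / M * (μs i).real univ := hclose _ (hμs i)
      _ ≤ ε / M * M := by gcongr
      _ = ε := div_mul_cancel₀ _ hM.ne'
  · calc _ ≤ ε / M * μ.real univ := hclose μ hμ
      _ ≤ ε / M * M := by gcongr; linarith
      _ = ε := div_mul_cancel₀ _ hM.ne'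

theorem FiniteMeasure.tendsto_of_tendsto_integral_polynomial {a b : ℝ} {μ : FiniteMeasure ℝ}
    {μs : ι → FiniteMeasure ℝ} (hμ : ∀ᵐ x ∂(μ : Measure ℝ), x ∈ Icc a b)
    (hμs : ∀ i, ∀ᵐ x ∂(μs i : Measure ℝ), x ∈ Icc a b)
    (hmom : ∀ p : Polynomial ℝ, Tendsto (fun i => ∫ x, p.eval x ∂(μs i : Measure ℝ)) L
      (𝓝 (∫ x, p.eval x ∂(μ : Measure ℝ)))) :
    Tendsto μs L (𝓝 μ) :=
  FiniteMeasure.tendsto_iff_forall_integral_tendsto.mpr fun f =>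
    tendsto_integral_of_tendsto_integral_polynomial hμ hμs hmom f.continuous.continuousOn

theorem FiniteMeasure.tendsto_measure_of_null_frontier_of_tendsto {Ω : Type*}
    [MeasurableSpace Ω] [TopologicalSpace Ω] [OpensMeasurableSpace Ω] [HasOuterApproxClosed Ω]
    [Nonempty Ω] {μ : FiniteMeasure Ω} {μs : ι → FiniteMeasure Ω} (h : Tendsto μs L (𝓝 μ))
    {E : Set Ω} (hE : μ (frontier E) = 0) :
    Tendsto (fun i => μs i E) L (𝓝 (μ E)) := by
  rcases eq_or_ne μ 0 with rfl | hμ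
  · have hmass : Tendsto (fun i => (μs i).mass) L (𝓝 0) := by simpa using h.mass
    simpa using tendsto_of_tendsto_of_tendsto_of_le_of_le tendsto_const_nhds hmass
      (fun _ => zero_le) fun i => (μs i).apply_le_mass E
  · simp only [FiniteMeasure.self_eq_mass_mul_normalize _ E]
    refine h.mass.mul (ProbabilityMeasure.tendsto_measure_of_null_frontier_of_tendsto
      (FiniteMeasure.tendsto_normalize_of_tendsto h hμ) ?_)
    rw [FiniteMeasure.normalize_eq_of_nonzero μ hμ, hE, mul_zero]

theorem tendsto_sdf_of_tendsto {μ : FiniteMeasure ℝ} {μs : ι → FiniteMeasure ℝ}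
    (h : Tendsto μs L (𝓝 μ)) (hμ : (μ : Measure ℝ) (Iio 0) = 0)
    (hμs : ∀ i, (μs i : Measure ℝ) (Iio 0) = 0) {lam : ℝ} (hlam : (μ : Measure ℝ) {lam} = 0) :
    Tendsto (fun i => sdf (μs i) lam) L (𝓝 (sdf μ lam)) := by
  have hIic := FiniteMeasure.tendsto_measure_of_null_frontier_of_tendsto h (E := Iic lam)
    (by simp only [frontier_Iic, FiniteMeasure.coeFn_def, hlam, ENNReal.toNNReal_zero])
  simp only [sdf_eq_toReal_measure_Iic hμ, sdf_eq_toReal_measure_Iic (hμs _)]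
  simpa only [FiniteMeasure.coeFn_def, ENNReal.coe_toNNReal_eq_toReal]
    using NNReal.tendsto_coe.mpr hIic

end

theorem stmt_14_general {ι : Type*} [Preorder ι]
    (K : ℝ)
    (μ : Measure ℝ) (μi : ι → Measure ℝ)
    [IsFiniteMeasure μ] [∀ i, IsFiniteMeasure (μi i)]
    (hs : μ (Icc 0 K)ᶜ = 0) (hsi : ∀ i, (μi i) (Icc 0 K)ᶜ = 0)
    (hmom : ∀ p : Polynomial ℝ,
      Tendsto (fun i => ∫ x, p.eval x ∂(μi i)) atTop (nhds (∫ x, p.eval x ∂μ)))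
    (lam : ℝ) (hatom : μ {lam} = 0) :
    Tendsto (fun i => sdf (μi i) lam) atTop (nhds (sdf μ lam)) ∧
    (μ {(0 : ℝ)} = 0 →
      sdf μ 0 = 0 ∧ Tendsto (fun i => sdf (μi i) 0) atTop (nhds 0)) := by
  let ν : FiniteMeasure ℝ := ⟨μ, inferInstance⟩
  let νs : ι → FiniteMeasure ℝ := fun i => ⟨μi i, inferInstance⟩
  have hweak : Tendsto νs atTop (𝓝 ν) :=
    FiniteMeasure.tendsto_of_tendsto_integral_polynomial (mem_ae_iff.mpr hs)
      (fun i => mem_ae_iff.mpr (hsi i)) hmom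
  have hneg : ∀ {m : Measure ℝ}, m (Icc 0 K)ᶜ = 0 → m (Iio 0) = 0 :=
    measure_mono_null fun x hx hx' => not_le.mpr hx hx'.1
  have key : ∀ t, μ {t} = 0 → Tendsto (fun i => sdf (μi i) t) atTop (𝓝 (sdf μ t)) :=
    fun t ht => tendsto_sdf_of_tendsto hweak (hneg hs) (fun i => hneg (hsi i)) ht
  refine ⟨key lam hatom, fun h0 => ?_⟩
  have hsdf0 : sdf μ 0 = 0 := by simp [sdf, h0]
  exact ⟨hsdf0, by simpa only [hsdf0] using key 0 h0⟩

/-- In the approximation setting (uniform norm bound, polynomial trace convergence):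
if `lam` is not an eigenvalue of `Δ` (i.e. the spectral measure has no atom at `lam`),
then `limᵢ F_{Δᵢ}(lam) = F_Δ(lam)`.  In particular if `ker Δ = 0` (no atom at `0`),
then `limᵢ F_{Δᵢ}(0) = 0 = dim_π(ker Δ)`. -/
theorem stmt_14 {ι : Type*} [Preorder ι] [Nonempty ι] [IsDirected ι (· ≤ ·)]
    (d : ℕ) (K : ℝ)
    (μ : Measure ℝ) (μi : ι → Measure ℝ)
    [IsFiniteMeasure μ] [∀ i, IsFiniteMeasure (μi i)]
    (hs : μ (Icc 0 K)ᶜ = 0) (hsi : ∀ i, (μi i) (Icc 0 K)ᶜ = 0)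
    (hd : (μ Set.univ).toReal = d) (hdi : ∀ i, ((μi i) Set.univ).toReal = d)
    (hmom : ∀ p : Polynomial ℝ,
      Tendsto (fun i => ∫ x, p.eval x ∂(μi i)) atTop (nhds (∫ x, p.eval x ∂μ)))
    (lam : ℝ) (hatom : μ {lam} = 0) :
    Tendsto (fun i => sdf (μi i) lam) atTop (nhds (sdf μ lam)) ∧
    (μ {(0 : ℝ)} = 0 →
      sdf μ 0 = 0 ∧ Tendsto (fun i => sdf (μi i) 0) atTop (nhds 0)) :=
  stmt_14_general K μ μi hs hsi hmom lam hatom
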